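/- Let φ(n₁, n₂, n) = |n₁|² ± |n₂| − |n|² on ℤ² and suppose N₁ ∼ N ≳ N₂ and 0 < s < 1. Fix n with |n| ∼ N. Then the set { n₁ ∈ ℤ² : |n₁| ∼ N₁, |n − n₁| ∼ N₂, |φ(n₁, n − n₁, n)| ≤ C N^{s+1} } has cardinality at most C' N^{s+1+ε} for any ε > 0. -/
import Mathlib


/-- Euclidean norm of a lattice point in `ℤ²`. -/
noncomputable def en2 (p : ℤ × ℤ) : ℝ :=
  Real.sqrt ((p.1 : ℝ) ^ 2 + (p.2 : ℝ) ^ 2)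

/-- The phase `φ(n₁,n₂,n) = |n₁|² ± |n₂| − |n|²` (sign given by `sgn`). -/
noncomputable def phaseFn (sgn : ℝ) (n₁ n₂ n : ℤ × ℤ) : ℝ :=
  en2 n₁ ^ 2 + sgn * en2 n₂ - en2 n ^ 2

lemma en2_nonneg (p : ℤ × ℤ) : 0 ≤ en2 p := Real.sqrt_nonneg _

lemma en2_sq (p : ℤ × ℤ) : en2 p ^ 2 = (p.1:ℝ)^2 + (p.2:ℝ)^2 :=
  Real.sq_sqrt (by positivity)

lemma abs_fst_le_en2 (p : ℤ × ℤ) : |(p.1:ℝ)| ≤ en2 p := by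
  rw [← Real.sqrt_sq_eq_abs]
  exact Real.sqrt_le_sqrt (by nlinarith [sq_nonneg ((p.2:ℝ))])

lemma abs_snd_le_en2 (p : ℤ × ℤ) : |(p.2:ℝ)| ≤ en2 p := by
  rw [← Real.sqrt_sq_eq_abs]
  exact Real.sqrt_le_sqrt (by nlinarith [sq_nonneg ((p.1:ℝ))])

lemma lemA (a L : ℝ) (hL : 0 ≤ L) (T : Finset ℤ)
    (hT : ∀ z ∈ T, a ≤ (z:ℝ) ∧ (z:ℝ) ≤ a + L) : (T.card : ℝ) ≤ L + 1 := by
  have hsub : T ⊆ Finset.Icc ⌈a⌉ ⌊a + L⌋ := fun z hz => by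
    obtain ⟨h1, h2⟩ := hT z hz
    exact Finset.mem_Icc.2 ⟨Int.ceil_le.2 h1, Int.le_floor.2 h2⟩
  rcases le_or_gt ⌈a⌉ ⌊a + L⌋ with h | h
  · have hc := Finset.card_le_card hsub
    rw [Int.card_Icc] at hc
    have h0 : (0:ℤ) ≤ ⌊a + L⌋ + 1 - ⌈a⌉ := by omega
    have hc2 : (T.card : ℤ) ≤ ⌊a + L⌋ + 1 - ⌈a⌉ := by
      calc (T.card : ℤ) ≤ (((⌊a + L⌋ + 1 - ⌈a⌉).toNat : ℕ) : ℤ) := by exact_mod_cast hc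
        _ = ⌊a + L⌋ + 1 - ⌈a⌉ := Int.toNat_of_nonneg h0
    have h1 : (⌊a + L⌋ : ℝ) ≤ a + L := Int.floor_le _
    have h2 : a ≤ (⌈a⌉ : ℝ) := Int.le_ceil _
    have hc3 : ((T.card : ℤ) : ℝ) ≤ ((⌊a + L⌋ + 1 - ⌈a⌉ : ℤ) : ℝ) := by exact_mod_cast hc2
    push_cast at hc3
    push_cast
    linarith
  · rw [Finset.Icc_eq_empty_of_lt h] at hsub
    have : T = ∅ := Finset.subset_empty.1 hsub
    simp [this]; linarith

lemma lemB (M L : ℝ) (hM : 0 ≤ M) (hL : 0 ≤ L) (g : ℤ → ℝ) (S : Finset (ℤ × ℤ))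
    (hS : ∀ p ∈ S, |(p.1:ℝ)| ≤ M ∧
      ((g p.1 ≤ (p.2:ℝ) ∧ (p.2:ℝ) ≤ g p.1 + L) ∨
       (-(g p.1) - L ≤ (p.2:ℝ) ∧ (p.2:ℝ) ≤ -(g p.1)))) :
    (S.card : ℝ) ≤ (2 * M + 1) * (2 * (L + 1)) := by
  classical
  set t : Finset ℤ := Finset.Icc (-⌊M⌋) ⌊M⌋ with ht
  have hmem : ∀ p ∈ S, p.1 ∈ t := by
    intro p hp
    obtain ⟨h1, -⟩ := hS p hp
    obtain ⟨ha, hb⟩ := abs_le.1 h1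
    refine Finset.mem_Icc.2 ⟨?_, Int.le_floor.2 hb⟩
    have : (-p.1 : ℤ) ≤ ⌊M⌋ := Int.le_floor.2 (by push_cast; linarith)
    omega
  have hfib : ∀ x ∈ t, ((S.filter (fun p => p.1 = x)).card : ℝ) ≤ 2 * (L + 1) := by
    intro x _
    set F := S.filter (fun p => p.1 = x) with hF
    have hinj : Set.InjOn Prod.snd (F : Set (ℤ × ℤ)) := by
      intro p hp q hq h
      have hp1 := (Finset.mem_filter.1 hp).2
      have hq1 := (Finset.mem_filter.1 hq).2
      exact Prod.ext (by rw [hp1, hq1]) h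
    have hcardF : F.card = (F.image Prod.snd).card := (Finset.card_image_of_injOn hinj).symm
    set T := F.image Prod.snd with hT
    set T₁ := T.filter (fun z : ℤ => g x ≤ (z:ℝ) ∧ (z:ℝ) ≤ g x + L) with hT1
    set T₂ := T.filter (fun z : ℤ => -(g x) - L ≤ (z:ℝ) ∧ (z:ℝ) ≤ -(g x)) with hT2
    have hsub : T ⊆ T₁ ∪ T₂ := by
      intro z hz
      obtain ⟨p, hpF, rfl⟩ := Finset.mem_image.1 hz
      have hpS := Finset.mem_of_mem_filter p hpF
      have hp1 := (Finset.mem_filter.1 hpF).2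
      obtain ⟨-, hd⟩ := hS p hpS
      rw [hp1] at hd
      rcases hd with hd | hd
      · exact Finset.mem_union_left _ (Finset.mem_filter.2 ⟨hz, hd⟩)
      · exact Finset.mem_union_right _ (Finset.mem_filter.2 ⟨hz, hd⟩)
    have hbT1 : (T₁.card : ℝ) ≤ L + 1 := by
      apply lemA (g x) L hL
      intro z hz
      exact (Finset.mem_filter.1 hz).2
    have hbT2 : (T₂.card : ℝ) ≤ L + 1 := by
      apply lemA (-(g x) - L) L hL
      intro z hz
      obtain ⟨h1, h2⟩ := (Finset.mem_filter.1 hz).2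
      exact ⟨h1, by linarith⟩
    have hc : T.card ≤ T₁.card + T₂.card :=
      le_trans (Finset.card_le_card hsub) (Finset.card_union_le _ _)
    have : (T.card : ℝ) ≤ 2 * (L + 1) := by
      have : (T.card : ℝ) ≤ (T₁.card : ℝ) + (T₂.card : ℝ) := by exact_mod_cast hc
      linarith
    rw [hcardF]
    exact this
  have htcard : (t.card : ℝ) ≤ 2 * M + 1 := by
    have hM0 : (0:ℤ) ≤ ⌊M⌋ := Int.floor_nonneg.2 hM
    have h1 : t.card = (⌊M⌋ + 1 - -⌊M⌋).toNat := Int.card_Icc _ _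
    have h2 : ((⌊M⌋ + 1 - -⌊M⌋).toNat : ℤ) = 2 * ⌊M⌋ + 1 := by
      rw [Int.toNat_of_nonneg (by omega)]; ring
    have h3 : (t.card : ℤ) = 2 * ⌊M⌋ + 1 := by rw [h1]; exact h2
    have h4 : ((t.card : ℤ) : ℝ) = 2 * (⌊M⌋ : ℝ) + 1 := by exact_mod_cast h3
    have h5 : (⌊M⌋ : ℝ) ≤ M := Int.floor_le _
    push_cast at h4
    linarith
  rw [Finset.card_eq_sum_card_fiberwise hmem]
  push_cast
  calc ∑ x ∈ t, ((S.filter (fun p => p.1 = x)).card : ℝ)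
      ≤ ∑ _x ∈ t, (2 * (L + 1)) := Finset.sum_le_sum hfib
    _ = t.card * (2 * (L + 1)) := by rw [Finset.sum_const, nsmul_eq_mul]
    _ ≤ (2 * M + 1) * (2 * (L + 1)) := by
        apply mul_le_mul_of_nonneg_right htcard (by linarith)

lemma lemC (A E M L : ℝ) (hA : 0 ≤ A) (hE : 0 ≤ E) (hM : 0 ≤ M) (hL0 : 0 ≤ L)
    (hL : E ≤ Real.sqrt (A / 2) * L) (S : Finset (ℤ × ℤ))
    (hS : ∀ p ∈ S, |(p.1:ℝ)| ≤ M ∧ A / 2 ≤ (p.2:ℝ)^2 ∧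
      A ≤ (p.1:ℝ)^2 + (p.2:ℝ)^2 ∧ (p.1:ℝ)^2 + (p.2:ℝ)^2 ≤ A + 2 * E) :
    (S.card : ℝ) ≤ (2 * M + 1) * (2 * (L + 1)) := by
  apply lemB M L hM hL0 (fun x => Real.sqrt (max (A - (x:ℝ)^2) (A / 2))) S
  intro p hp
  obtain ⟨h1, h2, h3, h4⟩ := hS p hp
  refine ⟨h1, ?_⟩
  set x := ((p.1:ℤ):ℝ) with hx
  set y := ((p.2:ℤ):ℝ) with hy
  set l := Real.sqrt (max (A - x^2) (A / 2)) with hl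
  have hl0 : 0 ≤ l := Real.sqrt_nonneg _
  have hmax0 : 0 ≤ max (A - x^2) (A / 2) := le_trans (by linarith) (le_max_right _ _)
  have hlsq : l^2 = max (A - x^2) (A / 2) := Real.sq_sqrt hmax0
  have hlow : l ≤ |y| := by
    rw [← Real.sqrt_sq_eq_abs]
    exact Real.sqrt_le_sqrt (max_le (by linarith) h2)
  have hAl : Real.sqrt (A / 2) ≤ l := Real.sqrt_le_sqrt (le_max_right _ _)
  have hEl : E ≤ l * L := le_trans hL (mul_le_mul_of_nonneg_right hAl hL0)
  have hup : |y| ≤ l + L := by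
    rw [← Real.sqrt_sq_eq_abs]
    have h5 : y^2 ≤ (l + L)^2 := by
      have hmle : A - x^2 ≤ l^2 := by rw [hlsq]; exact le_max_left _ _
      nlinarith
    calc Real.sqrt (y^2) ≤ Real.sqrt ((l + L)^2) := Real.sqrt_le_sqrt h5
      _ = l + L := Real.sqrt_sq (by linarith)
  rcases le_or_gt 0 y with hy0 | hy0
  · left
    rw [abs_of_nonneg hy0] at hlow hup
    exact ⟨hlow, hup⟩
  · right
    rw [abs_of_neg hy0] at hlow hup
    exact ⟨by linarith, by linarith⟩

set_option maxHeartbeats 1000000 in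
/-- Counting bound from the second deterministic tensor estimate: with
`N₁ ∼ N ≳ N₂`, `0 < s < 1` and fixed `n` with `|n| ∼ N`, the set
`{n₁ ∈ ℤ² : |n₁| ∼ N₁, |n−n₁| ∼ N₂, |φ(n₁, n−n₁, n)| ≤ C N^{s+1}}` has at
most `C' N^{s+1+ε}` elements. Comparability constants are encoded by `K`. -/
theorem stmt17 (ε K s : ℝ) (hε : 0 < ε) (hK : 1 ≤ K) (hs0 : 0 < s) (hs1 : s < 1) :
    ∃ C > 0, ∀ (N N₁ N₂ sgn : ℝ) (n : ℤ × ℤ), sgn = 1 ∨ sgn = -1 →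
      1 ≤ N → N₂ ≤ K * N → N / K ≤ N₁ → N₁ ≤ K * N →
      N / K ≤ en2 n → en2 n ≤ K * N →
      ∀ S : Finset (ℤ × ℤ),
        (∀ n₁ ∈ S, N₁ / K ≤ en2 n₁ ∧ en2 n₁ ≤ K * N₁ ∧
          N₂ / K ≤ en2 (n - n₁) ∧ en2 (n - n₁) ≤ K * N₂ ∧
          |phaseFn sgn n₁ (n - n₁) n| ≤ K * N ^ (s + 1)) →
        (S.card : ℝ) ≤ C * N ^ (s + 1 + ε) := by
  classical
  have hK0 : (0:ℝ) < K := lt_of_lt_of_le one_pos hK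
  have hKsq : (0:ℝ) ≤ K^2 := sq_nonneg K
  have hK2 : (1:ℝ) ≤ K^2 := by nlinarith
  have hK3 : (1:ℝ) ≤ K^3 := by nlinarith
  have hK5 : (1:ℝ) ≤ K^5 := by nlinarith
  have hKK2 : K ≤ K^2 := by nlinarith
  set N₀ : ℝ := max 1 ((4 * K ^ 4) ^ ((1:ℝ) / (1 - s))) with hN₀def
  have hN₀1 : (1:ℝ) ≤ N₀ := le_max_left _ _
  have hKN₀ : (0:ℝ) ≤ K^2 * N₀ := mul_nonneg hKsq (by linarith)
  set C₁ : ℝ := (2 * K^2 * N₀ + 1) * (2 * (2 * K^2 * N₀ + 1)) with hC₁def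
  have hC₁pos : 0 < C₁ := by nlinarith
  refine ⟨C₁ + 60 * K^5, by linarith, ?_⟩
  intro N N₁ N₂ sgn n hsgn hN hN₂ hN₁l hN₁u hnl hnu S hS
  have hN0 : (0:ℝ) < N := lt_of_lt_of_le one_pos hN
  set ρ : ℝ := en2 n with hρdef
  set E : ℝ := 2 * K^2 * N ^ (s + 1) with hEdef
  have hNs1 : N ≤ N ^ (s + 1) := by
    have h := Real.rpow_le_rpow_of_exponent_le hN (show (1:ℝ) ≤ s + 1 by linarith)
    rwa [Real.rpow_one] at h
  have hNspos : (0:ℝ) < N ^ (s + 1) := Real.rpow_pos_of_pos hN0 _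
  have hNsε : N ^ (s + 1) ≤ N ^ (s + 1 + ε) :=
    Real.rpow_le_rpow_of_exponent_le hN (by linarith)
  have hNε1 : (1:ℝ) ≤ N ^ (s + 1 + ε) := by
    have h := Real.rpow_le_rpow_of_exponent_le hN (show (0:ℝ) ≤ s + 1 + ε by linarith)
    rwa [Real.rpow_zero] at h
  have hE0 : 0 ≤ E := by positivity
  have hKN1 : (1:ℝ) ≤ K^2 * N := by
    calc (1:ℝ) = 1 * 1 := by ring
      _ ≤ K^2 * N := mul_le_mul hK2 hN zero_le_one (by positivity)
  -- key per-element facts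
  have key : ∀ p ∈ S, |(p.1:ℝ)| ≤ K^2 * N ∧ |(p.2:ℝ)| ≤ K^2 * N ∧
      ρ^2 - E ≤ (p.1:ℝ)^2 + (p.2:ℝ)^2 ∧ (p.1:ℝ)^2 + (p.2:ℝ)^2 ≤ ρ^2 + E := by
    intro p hp
    obtain ⟨h1, h2, h3, h4, h5⟩ := hS p hp
    have hep : en2 p ≤ K^2 * N := by
      calc en2 p ≤ K * N₁ := h2
        _ ≤ K * (K * N) := mul_le_mul_of_nonneg_left hN₁u hK0.le
        _ = K^2 * N := by ring
    have ha1 : |(p.1:ℝ)| ≤ K^2 * N := le_trans (abs_fst_le_en2 p) hep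
    have ha2 : |(p.2:ℝ)| ≤ K^2 * N := le_trans (abs_snd_le_en2 p) hep
    have hw0 : 0 ≤ en2 (n - p) := en2_nonneg _
    have hw : en2 (n - p) ≤ K^2 * N ^ (s + 1) := by
      calc en2 (n - p) ≤ K * N₂ := h4
        _ ≤ K * (K * N) := mul_le_mul_of_nonneg_left hN₂ hK0.le
        _ = K^2 * N := by ring
        _ ≤ K^2 * N ^ (s + 1) := mul_le_mul_of_nonneg_left hNs1 hKsq
    have hKN : K * N ^ (s + 1) ≤ K^2 * N ^ (s + 1) :=
      mul_le_mul_of_nonneg_right hKK2 hNspos.le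
    simp only [phaseFn] at h5
    obtain ⟨hp1, hp2⟩ := abs_le.1 h5
    have hsq := en2_sq p
    have hann : ρ^2 - E ≤ en2 p ^ 2 ∧ en2 p ^ 2 ≤ ρ^2 + E := by
      rcases hsgn with h | h <;> rw [h] at hp1 hp2 <;>
        exact ⟨by linarith, by linarith⟩
    rw [hsq] at hann
    exact ⟨ha1, ha2, hann.1, hann.2⟩
  rcases le_total N N₀ with hsmall | hlarge
  · -- small N : crude box count
    have hbox : (S.card : ℝ) ≤ (2 * (K^2 * N) + 1) * (2 * (2 * K^2 * N + 1)) := by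
      apply lemB (K^2 * N) (2 * K^2 * N) (by positivity) (by positivity)
        (fun _ => -(K^2 * N)) S
      intro p hp
      obtain ⟨h1, h2, -, -⟩ := key p hp
      obtain ⟨hb1, hb2⟩ := abs_le.1 h2
      exact ⟨h1, Or.inl ⟨hb1, by linarith⟩⟩
    have hKNN₀ : K^2 * N ≤ K^2 * N₀ := mul_le_mul_of_nonneg_left hsmall hKsq
    have hmono : (2 * (K^2 * N) + 1) * (2 * (2 * K^2 * N + 1)) ≤ C₁ := by
      have hab : 2 * K^2 * N + 1 ≤ 2 * K^2 * N₀ + 1 := by linarith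
      have h := mul_le_mul hab
        (show 2 * (2 * K^2 * N + 1) ≤ 2 * (2 * K^2 * N₀ + 1) by linarith)
        (by positivity) (by linarith)
      calc (2 * (K^2 * N) + 1) * (2 * (2 * K^2 * N + 1))
          = (2 * K^2 * N + 1) * (2 * (2 * K^2 * N + 1)) := by ring
        _ ≤ (2 * K^2 * N₀ + 1) * (2 * (2 * K^2 * N₀ + 1)) := h
        _ = C₁ := hC₁def.symm
    have hK5' : (0:ℝ) ≤ K^5 := pow_nonneg hK0.le 5
    calc (S.card : ℝ) ≤ C₁ := le_trans hbox hmono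
      _ = C₁ * 1 := by ring
      _ ≤ C₁ * N ^ (s + 1 + ε) := mul_le_mul_of_nonneg_left hNε1 hC₁pos.le
      _ ≤ (C₁ + 60 * K^5) * N ^ (s + 1 + ε) :=
          mul_le_mul_of_nonneg_right (by linarith) (by linarith)
  · -- large N : annulus count
    have hpow : 4 * K^4 ≤ N ^ (1 - s) := by
      have hb : (4 * K^4) ^ ((1:ℝ) / (1 - s)) ≤ N := le_trans (le_max_right _ _) hlarge
      have h1s : (0:ℝ) < 1 - s := by linarith
      have h2 : ((4 * K^4) ^ ((1:ℝ) / (1 - s))) ^ (1 - s) ≤ N ^ (1 - s) :=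
        Real.rpow_le_rpow (by positivity) hb (le_of_lt h1s)
      rwa [← Real.rpow_mul (by positivity), one_div_mul_cancel (ne_of_gt h1s),
        Real.rpow_one] at h2
    have hmulN : N ^ (s + 1) * N ^ (1 - s) = N * N := by
      rw [← Real.rpow_add hN0]
      have h : s + 1 + (1 - s) = 2 := by ring
      rw [h, show (2:ℝ) = ((2:ℕ):ℝ) by norm_num, Real.rpow_natCast]
      ring
    have hEsmall : E ≤ N * N / (2 * K^2) := by
      have h1 : N ^ (s + 1) * (4 * K^4) ≤ N * N := by
        calc N ^ (s + 1) * (4 * K^4) ≤ N ^ (s + 1) * N ^ (1 - s) :=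
              mul_le_mul_of_nonneg_left hpow (le_of_lt hNspos)
          _ = N * N := hmulN
      rw [hEdef, le_div_iff₀ (by positivity)]
      calc 2 * K^2 * N ^ (s + 1) * (2 * K^2) = N ^ (s + 1) * (4 * K^4) := by ring
        _ ≤ N * N := h1
    set A : ℝ := ρ^2 - E with hAdef
    have hρl : N / K ≤ ρ := hnl
    have hρ2 : N * N / K^2 ≤ ρ^2 := by
      have h0 : (0:ℝ) ≤ N / K := by positivity
      have h1 : (N / K)^2 ≤ ρ^2 := pow_le_pow_left₀ h0 hρl 2
      have h2 : (N / K)^2 = N * N / K^2 := by field_simp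
      rw [h2] at h1
      exact h1
    have hA1 : N * N / (2 * K^2) ≤ A := by
      rw [hAdef]
      have h : N * N / K^2 - N * N / (2 * K^2) = N * N / (2 * K^2) := by
        field_simp; ring
      linarith
    have hA0 : 0 ≤ A := le_trans (by positivity) hA1
    have hsqrtA : N / (2 * K) ≤ Real.sqrt (A / 2) := by
      have h1 : (N / (2 * K))^2 ≤ A / 2 := by
        have he : (N / (2 * K))^2 = N * N / (2 * K^2) / 2 := by field_simp
        rw [he]
        linarith
      calc N / (2 * K) = Real.sqrt ((N / (2 * K))^2) :=
            (Real.sqrt_sq (by positivity)).symm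
        _ ≤ Real.sqrt (A / 2) := Real.sqrt_le_sqrt h1
    set L : ℝ := 4 * K^3 * N ^ s with hLdef
    have hNs0 : (0:ℝ) < N ^ s := Real.rpow_pos_of_pos hN0 _
    have hL0 : 0 ≤ L := by positivity
    have hNsplit : N ^ s * N = N ^ (s + 1) := by
      rw [Real.rpow_add hN0, Real.rpow_one]
    have hEL : E ≤ Real.sqrt (A / 2) * L := by
      have h1 : (N / (2 * K)) * L ≤ Real.sqrt (A / 2) * L :=
        mul_le_mul_of_nonneg_right hsqrtA hL0
      have h2 : (N / (2 * K)) * L = 2 * K^2 * (N ^ s * N) := by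
        rw [hLdef]; field_simp; ring
      rw [hEdef, ← hNsplit]
      rw [h2] at h1
      linarith
    -- split S
    set S₁ := S.filter (fun p => A / 2 ≤ (p.1:ℝ)^2) with hS₁def
    set S₂ := S.filter (fun p => A / 2 ≤ (p.2:ℝ)^2) with hS₂def
    have hsplit : S ⊆ S₁ ∪ S₂ := by
      intro p hp
      obtain ⟨-, -, h3, -⟩ := key p hp
      rcases le_total (A / 2) ((p.1:ℝ)^2) with h | h
      · exact Finset.mem_union_left _ (Finset.mem_filter.2 ⟨hp, h⟩)
      · exact Finset.mem_union_right _ (Finset.mem_filter.2 ⟨hp, by linarith⟩)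
    have hM0 : (0:ℝ) ≤ K^2 * N := by positivity
    have hcard2 : (S₂.card : ℝ) ≤ (2 * (K^2 * N) + 1) * (2 * (L + 1)) := by
      apply lemC A E (K^2 * N) L hA0 hE0 hM0 hL0 hEL
      intro p hp
      have hpS := Finset.mem_of_mem_filter p hp
      obtain ⟨h1, h2, h3, h4⟩ := key p hpS
      have hf := (Finset.mem_filter.1 hp).2
      exact ⟨h1, hf, by linarith, by linarith⟩
    have hcard1 : (S₁.card : ℝ) ≤ (2 * (K^2 * N) + 1) * (2 * (L + 1)) := by
      have hswap : S₁.card = (S₁.image Prod.swap).card :=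
        (Finset.card_image_of_injective S₁ Prod.swap_injective).symm
      rw [hswap]
      apply lemC A E (K^2 * N) L hA0 hE0 hM0 hL0 hEL
      intro q hq
      obtain ⟨p, hpS₁, rfl⟩ := Finset.mem_image.1 hq
      have hpS := Finset.mem_of_mem_filter p hpS₁
      obtain ⟨h1, h2, h3, h4⟩ := key p hpS
      have hf := (Finset.mem_filter.1 hpS₁).2
      simp only [Prod.fst_swap, Prod.snd_swap]
      exact ⟨h2, hf, by linarith, by linarith⟩
    have htot : (S.card : ℝ) ≤ 2 * ((2 * (K^2 * N) + 1) * (2 * (L + 1))) := by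
      have h1 : S.card ≤ S₁.card + S₂.card :=
        le_trans (Finset.card_le_card hsplit) (Finset.card_union_le _ _)
      have h2 : (S.card : ℝ) ≤ (S₁.card : ℝ) + (S₂.card : ℝ) := by exact_mod_cast h1
      linarith
    have hNs1' : (1:ℝ) ≤ N ^ s := by
      have h := Real.rpow_le_rpow_of_exponent_le hN (le_of_lt hs0)
      rwa [Real.rpow_zero] at h
    have e1 : (1:ℝ) ≤ K^3 * N ^ s := by
      calc (1:ℝ) = 1 * 1 := by ring
        _ ≤ K^3 * N ^ s := mul_le_mul hK3 hNs1' zero_le_one (by positivity)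
    have f1 : K^2 * N ≤ K^5 * (N ^ s * N) := by
      calc K^2 * N = K^2 * N * 1 := by ring
        _ ≤ K^2 * N * (K^3 * N ^ s) := mul_le_mul_of_nonneg_left e1 hM0
        _ = K^5 * (N ^ s * N) := by ring
    have f2 : K^3 * N ^ s ≤ K^5 * (N ^ s * N) := by
      calc K^3 * N ^ s = K^3 * N ^ s * 1 := by ring
        _ ≤ K^3 * N ^ s * (K^2 * N) := mul_le_mul_of_nonneg_left hKN1 (by positivity)
        _ = K^5 * (N ^ s * N) := by ring
    have e3 : (1:ℝ) ≤ K^5 * (N ^ s * N) := le_trans hKN1 f1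
    have hfinal : 2 * ((2 * (K^2 * N) + 1) * (2 * (L + 1))) ≤ 60 * K^5 * N ^ (s + 1) := by
      rw [hLdef, ← hNsplit]
      calc 2 * ((2 * (K^2 * N) + 1) * (2 * (4 * K^3 * N ^ s + 1)))
          = 32 * (K^5 * (N ^ s * N)) + 8 * (K^2 * N) + 16 * (K^3 * N ^ s) + 4 := by ring
        _ ≤ 60 * (K^5 * (N ^ s * N)) := by linarith
        _ = 60 * K^5 * (N ^ s * N) := by ring
    have hK5' : (0:ℝ) ≤ K^5 := pow_nonneg hK0.le 5
    calc (S.card : ℝ) ≤ 60 * K^5 * N ^ (s + 1) := le_trans htot hfinal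
      _ ≤ 60 * K^5 * N ^ (s + 1 + ε) :=
          mul_le_mul_of_nonneg_left hNsε (by linarith)
      _ ≤ (C₁ + 60 * K^5) * N ^ (s + 1 + ε) :=
          mul_le_mul_of_nonneg_right (by linarith) (by linarith)
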